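/- arXiv:0806.3223 — 5 statements merged into one kernel-verified Lean document; each statement's English description precedes it below -/
import Mathlib

section
/- Let p₁, p₂, r₁, r₂ ≥ 2 with gcd(p₁,p₂) = 1 and gcd(r₁,r₂) = 1, and let ψ : C_{p₁} ∗ C_{p₂} → C_{r₁} ∗ C_{r₂} be a surjective group homomorphism. Then there exist a generator s₁ of the first factor C_{r₁} (i.e., an element of the image of C_{r₁} in the free product whose powers give that whole factor), a generator s₂ of the second factor C_{r₂}, and elements u₁, u₂ of C_{r₁} ∗ C_{r₂} such that either ψ(t₁) = u₁ s₁ u₁⁻¹ and ψ(t₂) = u₂ s₂ u₂⁻¹, or else ψ(t₁) = u₁ s₂ u₁⁻¹ and ψ(t₂) = u₂ s₁ u₂⁻¹. -/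
/-!
An element of finite order of a free product of groups is conjugate into a factor. Indeed, a
reduced word whose first and last letters lie in different factors has infinite order, since its
powers are again reduced words; and if they lie in the same factor, the word `w₁ w₂` is conjugate
to the shorter word `w₂ w₁`, in which the last letter of `w₂` merges with the first of `w₁`.

So `ψ t₁` and `ψ t₂` are conjugate to elements `a` and `b` of the factors `C r₁`, `C r₂`. The
projections of `C r₁ ∗ C r₂` onto `C r₁` and `C r₂` kill conjugation, and composed with `ψ` they are
surjective, so each factor is generated by the projections of `a` and `b`. As both factors are
nontrivial, `a` and `b` must lie in different factors, and each generates its own.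
-/

abbrev C (n : ℕ) : Type := Multiplicative (ZMod n)

open Monoid

namespace Monoid.CoprodI

variable {ι : Type*} {M : ι → Type*} [∀ i, Monoid (M i)]

section Length

variable [DecidableEq ι] [∀ i, DecidableEq (M i)]

namespace Word

theorem equiv_one : Word.equiv (1 : CoprodI M) = empty :=
  one_smul (CoprodI M) (empty : Word M)

theorem equiv_mul (g h : CoprodI M) : Word.equiv (g * h) = g • Word.equiv h :=
  mul_smul g h (empty : Word M)

theorem length_of_smul_le_length_tail_add_one {i : ι} (m : M i) (w : Word M) :
    (of m • w).toList.length ≤ (equivPair i w).tail.toList.length + 1 := by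
  rw [of_smul_def, rcons]
  split_ifs <;> simp

theorem length_equivPair_tail_le (i : ι) (w : Word M) :
    (equivPair i w).tail.toList.length ≤ w.toList.length := by
  obtain ⟨p, rfl⟩ := (equivPair i).symm.surjective w
  rw [Equiv.apply_symm_apply, equivPair_symm, rcons]
  split_ifs <;> simp

theorem length_equivPair_tail_add_one {i : ι} {w : Word M} (h : w.fstIdx = some i) :
    (equivPair i w).tail.toList.length + 1 = w.toList.length := by
  obtain ⟨p, rfl⟩ := (equivPair i).symm.surjective w
  rw [Equiv.apply_symm_apply, equivPair_symm, rcons] at *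
  split_ifs at * with h1
  · exact absurd h p.fstIdx_ne
  · simp

end Word

namespace NeWord

open Word

theorem equiv_prod {i j : ι} (w : NeWord M i j) : Word.equiv w.prod = w.toWord :=
  Word.equiv.apply_symm_apply w.toWord

theorem length_prod_smul_le {i j : ι} (v : NeWord M i j) (w : Word M) :
    (v.prod • w).toList.length ≤ v.toList.length + w.toList.length := by
  induction v generalizing w with
  | singleton x _ =>
    simpa [prod_singleton, add_comm] using (length_of_smul_le_length_tail_add_one x w).trans
      (Nat.succ_le_succ (length_equivPair_tail_le _ w))
  | append v₁ _ v₂ ih₁ ih₂ =>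
    rw [append_prod, mul_smul, toList, List.length_append]
    have := ih₁ (v₂.prod • w)
    have := ih₂ w
    omega

theorem length_prod_smul_lt {i j : ι} (v : NeWord M i j) {w : Word M} (h : w.fstIdx = some j) :
    (v.prod • w).toList.length < v.toList.length + w.toList.length := by
  induction v generalizing w with
  | singleton x _ =>
    have := length_equivPair_tail_add_one h
    have := length_of_smul_le_length_tail_add_one x w
    simp only [prod_singleton, toList, List.length_singleton]
    omega
  | append v₁ _ v₂ ih₁ ih₂ =>
    rw [append_prod, mul_smul, toList, List.length_append]
    have := length_prod_smul_le v₁ (v₂.prod • w)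
    have := ih₂ h
    omega

end NeWord

end Length

namespace NeWord

theorem prod_ne_one {i j : ι} (w : NeWord M i j) : w.prod ≠ 1 := by
  classical
  intro h
  have hw : w.toWord = Word.empty := by
    rw [← equiv_prod, h, Word.equiv_one]
  exact w.toList_ne_nil (congrArg Word.toList hw)

theorem exists_prod_eq_prod_pow {i j : ι} (hij : i ≠ j) (w : NeWord M i j) {k : ℕ}
    (hk : k ≠ 0) : ∃ v : NeWord M i j, v.prod = w.prod ^ k := by
  induction k, Nat.one_le_iff_ne_zero.2 hk using Nat.le_induction with
  | base => exact ⟨w, (pow_one _).symm⟩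
  | succ k hk ih =>
    obtain ⟨v, hv⟩ := ih (by omega)
    exact ⟨v.append hij.symm w, by rw [append_prod, hv, pow_succ]⟩

theorem not_isOfFinOrder_prod {i j : ι} (hij : i ≠ j) (w : NeWord M i j) :
    ¬IsOfFinOrder w.prod := by
  intro h
  obtain ⟨k, hk, hpow⟩ := isOfFinOrder_iff_pow_eq_one.1 h
  obtain ⟨v, hv⟩ := w.exists_prod_eq_prod_pow hij hk.ne'
  exact v.prod_ne_one (hv.trans hpow)

end NeWord

theorem exists_neWord_prod_eq {g : CoprodI M} (hg : g ≠ 1) :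
    ∃ (i j : ι) (w : NeWord M i j), w.prod = g := by
  classical
  obtain ⟨i, j, w, hw⟩ := NeWord.of_word (Word.equiv g) fun h ↦ hg <| by
    rw [← Word.equiv.symm_apply_apply g, h, ← Word.equiv_one, Equiv.symm_apply_apply]
  exact ⟨i, j, w, by rw [NeWord.prod, hw]; exact Word.equiv.symm_apply_apply g⟩

theorem exists_eq_conj_of_isOfFinOrder {G : ι → Type*} [∀ i, Group (G i)] [Nonempty ι]
    {g : CoprodI G} (hg : IsOfFinOrder g) :
    ∃ (i : ι) (x : G i) (u : CoprodI G), g = u * of x * u⁻¹ := by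
  classical
  induction hn : (Word.equiv g).toList.length using Nat.strong_induction_on generalizing g with
  | _ n ih =>
  obtain rfl | hg1 := eq_or_ne g 1
  · exact ⟨Classical.arbitrary ι, 1, 1, by simp⟩
  obtain ⟨i, j, w, rfl⟩ := exists_neWord_prod_eq hg1
  cases w with
  | singleton x _ => exact ⟨i, x, 1, by simp [NeWord.prod_singleton]⟩
  | append w₁ _ w₂ =>
    obtain rfl | hij := eq_or_ne i j
    · have hlt : (Word.equiv (w₂.prod * w₁.prod)).toList.length < n := by
        have hfst : w₁.toWord.fstIdx = some i := by simp [Word.fstIdx, NeWord.toWord]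
        rw [Word.equiv_mul, ← hn, NeWord.equiv_prod, NeWord.equiv_prod]
        simpa [NeWord.toWord, add_comm] using w₂.length_prod_smul_lt hfst
      have hconj : IsConj (w₁.prod * w₂.prod) (w₂.prod * w₁.prod) :=
        isConj_iff.2 ⟨w₁.prod⁻¹, by group⟩
      obtain ⟨k, x, u, hu⟩ :=
        ih _ hlt (hconj.isOfFinOrder (by rwa [← NeWord.append_prod])) rfl
      refine ⟨k, x, w₁.prod * u, ?_⟩
      rw [NeWord.append_prod, ← mul_inv_cancel_right (w₁.prod * w₂.prod) w₁.prod,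
        mul_assoc w₁.prod, hu]
      group
    · exact absurd hg (NeWord.not_isOfFinOrder_prod hij _)

end Monoid.CoprodI

theorem MonoidHom.range_eq_zpowers {G H : Type*} [Group G] [Group H] (f : G →* H) {a : G}
    (ha : Subgroup.zpowers a = ⊤) : f.range = Subgroup.zpowers (f a) := by
  rw [range_eq_map, ← ha, map_zpowers]

theorem MonoidHom.apply_conj_eq {G A : Type*} [Group G] [CommGroup A] (f : G →* A) (u g : G) :
    f (u * g * u⁻¹) = f g := by
  simp

theorem zpowers_ofAdd_one (n : ℕ) :
    Subgroup.zpowers (Multiplicative.ofAdd (1 : ZMod n)) = ⊤ := by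
  refine (Subgroup.eq_top_iff' _).2 fun x ↦ ?_
  obtain ⟨k, hk⟩ := ZMod.intCast_surjective x.toAdd
  exact Subgroup.mem_zpowers_iff.2 ⟨k, by rw [← ofAdd_zsmul, zsmul_one, hk, ofAdd_toAdd]⟩

namespace Monoid.Coprod

section Bool

universe u

variable {M N : Type u} [Group M] [Group N]

instance instGroupCond : ∀ b : Bool, Group (cond b M N)
  | true => ‹Group M›
  | false => ‹Group N›

def mulEquivCoprodI : M ∗ N ≃* CoprodI (cond · M N) :=
  MonoidHom.toMulEquiv
    (lift (CoprodI.of (M := (cond · M N)) (i := true))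
      (CoprodI.of (M := (cond · M N)) (i := false)))
    (CoprodI.lift fun | true => inl | false => inr)
    (hom_ext rfl rfl)
    (CoprodI.ext_hom _ _ fun b ↦ by cases b <;> ext <;> simp)

theorem mulEquivCoprodI_symm_of_true (x : M) :
    mulEquivCoprodI.symm (CoprodI.of (M := (cond · M N)) (i := true) x) = inl x :=
  CoprodI.lift_of _ _

theorem mulEquivCoprodI_symm_of_false (y : N) :
    mulEquivCoprodI.symm (CoprodI.of (M := (cond · M N)) (i := false) y) = inr y :=
  CoprodI.lift_of _ _

theorem exists_eq_conj_inl_or_inr_of_isOfFinOrder {q : M ∗ N} (hq : IsOfFinOrder q) :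
    ∃ u : M ∗ N, (∃ a : M, q = u * inl a * u⁻¹) ∨ ∃ b : N, q = u * inr b * u⁻¹ := by
  obtain ⟨b, x, u, hu⟩ :=
    CoprodI.exists_eq_conj_of_isOfFinOrder (mulEquivCoprodI.toMonoidHom.isOfFinOrder hq)
  rw [MulEquiv.coe_toMonoidHom, ← MulEquiv.eq_symm_apply, map_mul, map_mul, map_inv] at hu
  refine ⟨mulEquivCoprodI.symm u, ?_⟩
  cases b
  · exact .inr ⟨x, hu.trans (congrArg (_ * · * _) (mulEquivCoprodI_symm_of_false x))⟩
  · exact .inl ⟨x, hu.trans (congrArg (_ * · * _) (mulEquivCoprodI_symm_of_true x))⟩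

end Bool

variable {G H : Type*} [Group G] [Group H]

theorem range_eq_zpowers_sup_zpowers {K : Type*} [Group K] (f : G ∗ H →* K) {a : G} {b : H}
    (ha : Subgroup.zpowers a = ⊤) (hb : Subgroup.zpowers b = ⊤) :
    f.range = Subgroup.zpowers (f (inl a)) ⊔ Subgroup.zpowers (f (inr b)) := by
  rw [range_eq, (f.comp inl).range_eq_zpowers ha, (f.comp inr).range_eq_zpowers hb]
  rfl

theorem zpowers_inl_eq_range {a : G} (ha : Subgroup.zpowers a = ⊤) :
    Subgroup.zpowers (inl a : G ∗ H) = (inl : G →* G ∗ H).range :=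
  ((inl : G →* G ∗ H).range_eq_zpowers ha).symm

theorem zpowers_inr_eq_range {b : H} (hb : Subgroup.zpowers b = ⊤) :
    Subgroup.zpowers (inr b : G ∗ H) = (inr : H →* G ∗ H).range :=
  ((inr : H →* G ∗ H).range_eq_zpowers hb).symm

end Monoid.Coprod

theorem images_of_generators_conjugate_to_factor_generators_general
    (p₁ p₂ r₁ r₂ : ℕ) (hp₁ : 2 ≤ p₁) (hp₂ : 2 ≤ p₂) (hr₁ : 2 ≤ r₁) (hr₂ : 2 ≤ r₂)
    (ψ : Monoid.Coprod (C p₁) (C p₂) →* Monoid.Coprod (C r₁) (C r₂))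
    (hψ : Function.Surjective ψ) :
    ∃ (s₁ s₂ u₁ u₂ : Monoid.Coprod (C r₁) (C r₂)),
      Subgroup.zpowers s₁ = (Monoid.Coprod.inl : C r₁ →* Monoid.Coprod (C r₁) (C r₂)).range ∧
      Subgroup.zpowers s₂ = (Monoid.Coprod.inr : C r₂ →* Monoid.Coprod (C r₁) (C r₂)).range ∧
      ((ψ (Monoid.Coprod.inl (Multiplicative.ofAdd (1 : ZMod p₁))) = u₁ * s₁ * u₁⁻¹ ∧
        ψ (Monoid.Coprod.inr (Multiplicative.ofAdd (1 : ZMod p₂))) = u₂ * s₂ * u₂⁻¹) ∨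
       (ψ (Monoid.Coprod.inl (Multiplicative.ofAdd (1 : ZMod p₁))) = u₁ * s₂ * u₁⁻¹ ∧
        ψ (Monoid.Coprod.inr (Multiplicative.ofAdd (1 : ZMod p₂))) = u₂ * s₁ * u₂⁻¹)) := by
  have : NeZero p₁ := ⟨by omega⟩
  have : NeZero p₂ := ⟨by omega⟩
  have : Fact (1 < r₁) := ⟨hr₁⟩
  have : Fact (1 < r₂) := ⟨hr₂⟩
  have hfst := (Coprod.fst.comp ψ).range_eq_top.2 (Coprod.fst_surjective.comp hψ)
  have hsnd := (Coprod.snd.comp ψ).range_eq_top.2 (Coprod.snd_surjective.comp hψ)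
  rw [Coprod.range_eq_zpowers_sup_zpowers _ (zpowers_ofAdd_one p₁) (zpowers_ofAdd_one p₂)]
    at hfst hsnd
  obtain ⟨u₁, ⟨a₁, h₁⟩ | ⟨b₁, h₁⟩⟩ := Coprod.exists_eq_conj_inl_or_inr_of_isOfFinOrder
    ((ψ.comp Coprod.inl).isOfFinOrder (isOfFinOrder_of_finite (Multiplicative.ofAdd 1)))
  <;> obtain ⟨u₂, ⟨a₂, h₂⟩ | ⟨b₂, h₂⟩⟩ := Coprod.exists_eq_conj_inl_or_inr_of_isOfFinOrder
    ((ψ.comp Coprod.inr).isOfFinOrder (isOfFinOrder_of_finite (Multiplicative.ofAdd 1)))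
  all_goals
    simp only [MonoidHom.comp_apply] at h₁ h₂
    simp only [MonoidHom.comp_apply, h₁, h₂, MonoidHom.apply_conj_eq, Coprod.fst_apply_inl,
      Coprod.fst_apply_inr, Coprod.snd_apply_inl, Coprod.snd_apply_inr,
      Subgroup.zpowers_one_eq_bot, bot_sup_eq, sup_bot_eq] at hfst hsnd
  · exact absurd hsnd bot_ne_top
  · exact ⟨Coprod.inl a₁, Coprod.inr b₂, u₁, u₂, Coprod.zpowers_inl_eq_range hfst,
      Coprod.zpowers_inr_eq_range hsnd, .inl ⟨h₁, h₂⟩⟩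
  · exact ⟨Coprod.inl a₂, Coprod.inr b₁, u₁, u₂, Coprod.zpowers_inl_eq_range hfst,
      Coprod.zpowers_inr_eq_range hsnd, .inr ⟨h₁, h₂⟩⟩
  · exact absurd hfst bot_ne_top

/-- Under a surjective homomorphism `ψ : C p₁ ∗ C p₂ → C r₁ ∗ C r₂`, the images of the
standard generators `t₁, t₂` of the factors are conjugate to generators of the
factors `C r₁` and `C r₂`, one of each. -/
theorem images_of_generators_conjugate_to_factor_generators
    (p₁ p₂ r₁ r₂ : ℕ) (hp₁ : 2 ≤ p₁) (hp₂ : 2 ≤ p₂) (hr₁ : 2 ≤ r₁) (hr₂ : 2 ≤ r₂)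
    (hp : Nat.gcd p₁ p₂ = 1) (hr : Nat.gcd r₁ r₂ = 1)
    (ψ : Monoid.Coprod (C p₁) (C p₂) →* Monoid.Coprod (C r₁) (C r₂))
    (hψ : Function.Surjective ψ) :
    ∃ (s₁ s₂ u₁ u₂ : Monoid.Coprod (C r₁) (C r₂)),
      Subgroup.zpowers s₁ = (Monoid.Coprod.inl : C r₁ →* Monoid.Coprod (C r₁) (C r₂)).range ∧
      Subgroup.zpowers s₂ = (Monoid.Coprod.inr : C r₂ →* Monoid.Coprod (C r₁) (C r₂)).range ∧
      ((ψ (Monoid.Coprod.inl (Multiplicative.ofAdd (1 : ZMod p₁))) = u₁ * s₁ * u₁⁻¹ ∧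
        ψ (Monoid.Coprod.inr (Multiplicative.ofAdd (1 : ZMod p₂))) = u₂ * s₂ * u₂⁻¹) ∨
       (ψ (Monoid.Coprod.inl (Multiplicative.ofAdd (1 : ZMod p₁))) = u₁ * s₂ * u₁⁻¹ ∧
        ψ (Monoid.Coprod.inr (Multiplicative.ofAdd (1 : ZMod p₂))) = u₂ * s₁ * u₂⁻¹)) :=
  images_of_generators_conjugate_to_factor_generators_general p₁ p₂ r₁ r₂ hp₁ hp₂ hr₁ hr₂ ψ hψ
end

section
/- Let p₁, p₂ ≥ 2 with gcd(p₁,p₂) = 1 and r₁, r₂ ≥ 2 with gcd(r₁,r₂) = 1. There exists a surjective group homomorphism from the torus-knot group G(p₁,p₂) = ⟨u, v ∣ u^{p₁} = v^{p₂}⟩ onto the torus-knot group G(r₁,r₂) = ⟨a, b ∣ a^{r₁} = b^{r₂}⟩ if and only if either (r₁ divides p₁ and r₂ divides p₂) or (r₁ divides p₂ and r₂ divides p₁). (This is the group-theoretic content of Proposition 2, equivalence of statements (2) and (3), since the group of the (p,q)-torus knot is ⟨x, y ∣ x^p = y^q⟩.) -/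
/-- The single relator `x^p * (y^q)⁻¹` of the `(p,q)`-torus knot group. -/
abbrev torusRel (p q : ℕ) : Set (FreeGroup Bool) :=
  {FreeGroup.of true ^ p * (FreeGroup.of false ^ q)⁻¹}

/-- The `(p,q)`-torus knot group `⟨x, y ∣ x^p = y^q⟩`. -/
abbrev G (p q : ℕ) : Type := PresentedGroup (torusRel p q)

/-!
Sending `a, b` to generators of `ℤ/r₁` and `ℤ/r₂` kills the central element `a^r₁ = b^r₂` and
maps `G(r₁,r₂)` onto the free product `ℤ/r₁ ∗ ℤ/r₂`. Composing an epimorphism from `G(p₁,p₂)`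
with it gives generators `U, V` of the free product with `U^p₁ = V^p₂` central, hence trivial:
a free product of nontrivial groups has trivial centre. By cyclic reduction of reduced words, an
element of finite order in a free product is conjugate into a factor, and `U, V` must be conjugate
into different factors because they generate. The projection onto the factor into which `U` is
conjugate kills `V`, so it maps `U` to a generator of that factor, whose order thus divides `p₁`.

Conversely, if `p₁ = r₁ k` and `p₂ = r₂ l`, then `u ↦ a^l, v ↦ b^k` is onto: as `p₁, p₂` are coprime,
so are `k` and `l`, `l` and `r₁`, `k` and `r₂`, and the image contains `a^r₁`, hence `a` and `b`.
-/

namespace Monoid.CoprodI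

open Subgroup

variable {ι : Type*} {H : ι → Type*} [∀ i, Group (H i)]

namespace Word

def inv (w : Word H) : Word H where
  toList := (w.toList.map fun l => ⟨l.1, l.2⁻¹⟩).reverse
  ne_one := by
    simp only [List.mem_reverse, List.mem_map]
    rintro _ ⟨l, hl, rfl⟩
    simpa using w.ne_one l hl
  chain_ne := by
    rw [List.isChain_reverse]
    exact List.isChain_map_of_isChain _ (fun _ _ h e => h e.symm) w.chain_ne

@[simp] theorem toList_inv (w : Word H) :
    w.inv.toList = (w.toList.map fun l => ⟨l.1, l.2⁻¹⟩).reverse :=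
  rfl

theorem prod_inv (w : Word H) : w.inv.prod = w.prod⁻¹ := by
  simp only [prod, toList_inv, List.map_reverse, List.map_map, List.prod_inv_reverse]
  rfl

theorem length_inv (w : Word H) : w.inv.toList.length = w.toList.length := by
  simp

def lastIdx (w : Word H) : Option ι :=
  w.toList.getLast?.map Sigma.fst

theorem fstIdx_inv (w : Word H) : w.inv.fstIdx = w.lastIdx := by
  simp only [fstIdx, lastIdx, toList_inv, List.head?_reverse, List.getLast?_map, Option.map_map]
  rfl

variable [DecidableEq ι] [∀ i, DecidableEq (H i)]

@[simp] theorem equiv_prod (w : Word H) : equiv w.prod = w :=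
  equiv.apply_symm_apply w

@[simp] theorem prod_equiv (x : CoprodI H) : (equiv x).prod = x :=
  equiv.symm_apply_apply x

theorem equiv_mul_s3 (x y : CoprodI H) : equiv (x * y) = x • equiv y :=
  (mul_smul x y (empty : Word H) :)

theorem equiv_inv (x : CoprodI H) : equiv x⁻¹ = (equiv x).inv := by
  rw [← equiv_prod (equiv x).inv, prod_inv, prod_equiv]

theorem toList_eq_cons_of_fstIdx_eq {w : Word H} {i : ι} (hw : w.fstIdx = some i) :
    w.toList = ⟨i, (equivPair i w).head⟩ :: (equivPair i w).tail.toList := by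
  have hrcons : rcons (equivPair i w) = w := (equivPair i).symm_apply_apply w
  have hhead : (equivPair i w).head ≠ 1 := by
    intro h
    rw [← hrcons, rcons, dif_pos h] at hw
    exact (equivPair i w).fstIdx_ne hw
  conv_lhs => rw [← hrcons, rcons, dif_neg hhead]
  rfl

theorem length_of_smul_le {w : Word H} {i : ι} (m : H i) (hw : w.fstIdx = some i) :
    (of m • w).toList.length ≤ w.toList.length := by
  rw [of_smul_def, toList_eq_cons_of_fstIdx_eq hw, rcons]
  split <;> simp [cons]

theorem toList_of_smul {w : Word H} {i : ι} {m : H i} (hm : m ≠ 1) (hw : w.fstIdx ≠ some i) :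
    (of m • w).toList = ⟨i, m⟩ :: w.toList := by
  rw [← cons_eq_smul (h1 := hw) (h2 := hm), cons_toList]

end Word

open Word

theorem NeWord.prod_ne_one_s3 {i j : ι} (w : NeWord H i j) : w.prod ≠ 1 := fun h => by
  classical
  exact w.toList_ne_nil <| congrArg Word.toList
    (equiv.symm.injective (h.trans prod_empty.symm) : w.toWord = empty)

theorem NeWord.prod_pow_ne_one {i j : ι} (w : NeWord H i j) (hij : i ≠ j) {n : ℕ} (hn : n ≠ 0) :
    w.prod ^ n ≠ 1 := by
  suffices ∀ k : ℕ, ∃ w' : NeWord H i j, w'.prod = w.prod ^ (k + 1) by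
    obtain ⟨w', hw'⟩ := this (n - 1)
    rw [← Nat.sub_add_cancel (Nat.one_le_iff_ne_zero.2 hn), ← hw']
    exact w'.prod_ne_one_s3
  intro k
  induction k with
  | zero => exact ⟨w, (pow_one _).symm⟩
  | succ k ih =>
    obtain ⟨w', hw'⟩ := ih
    exact ⟨w.append hij.symm w', by rw [NeWord.append_prod, hw', pow_succ' _ (k + 1)]⟩

section Length

variable [DecidableEq ι] [∀ i, DecidableEq (H i)]

theorem toList_equiv_mul_of {x : CoprodI H} {i : ι} {m : H i} (hm : m ≠ 1)
    (hx : (equiv x).lastIdx ≠ some i) :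
    (equiv (x * of m)).toList = (equiv x).toList ++ [⟨i, m⟩] := by
  rw [← inv_inv (x * of m), mul_inv_rev, ← map_inv, equiv_inv, equiv_mul_s3, equiv_inv, toList_inv,
    toList_of_smul (inv_ne_one.2 hm) (by rwa [fstIdx_inv])]
  simp [Function.comp_def]

theorem length_equiv_mul_of_le {x : CoprodI H} {i : ι} (m : H i)
    (hx : (equiv x).lastIdx = some i) :
    (equiv (x * of m)).toList.length ≤ (equiv x).toList.length := by
  rw [← inv_inv (x * of m), mul_inv_rev, ← map_inv, equiv_inv, length_inv, equiv_mul_s3]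
  calc _ ≤ (equiv x⁻¹).toList.length := length_of_smul_le _ (by rwa [equiv_inv, fstIdx_inv])
    _ = _ := by rw [equiv_inv, length_inv]

theorem not_isOfFinOrder_of_fstIdx_ne_lastIdx {x : CoprodI H}
    (hx : (equiv x).fstIdx ≠ (equiv x).lastIdx) : ¬IsOfFinOrder x := by
  have hne : equiv x ≠ empty := fun h => hx (by rw [h]; rfl)
  obtain ⟨i, j, w, hw⟩ := NeWord.of_word (equiv x) hne
  have hij : i ≠ j := by
    have hfst : w.toWord.toList.head? = _ := w.toList_head?
    have hlast : w.toWord.toList.getLast? = _ := w.toList_getLast?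
    rw [hw] at hfst hlast
    rintro rfl
    exact hx (by simp [fstIdx, lastIdx, hfst, hlast])
  have hprod : w.prod = x := by rw [NeWord.prod, hw, prod_equiv]
  rw [isOfFinOrder_iff_pow_eq_one]
  rintro ⟨n, hn, hxn⟩
  exact w.prod_pow_ne_one hij hn.ne' (hprod ▸ hxn)

theorem exists_of_eq_of_length_le_one [Nonempty ι] {x : CoprodI H}
    (hx : (equiv x).toList.length ≤ 1) : ∃ (i : ι) (m : H i), of m = x := by
  have hprod : ((equiv x).toList.map fun l => of l.2).prod = x := prod_equiv x
  match hl : (equiv x).toList, hx with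
  | [], _ => exact ⟨Classical.arbitrary ι, 1, by simp_all⟩
  | [⟨i, m⟩], _ => exact ⟨i, m, by simp_all⟩

/-- Cyclic reduction: conjugating by the first letter merges it into the last one. -/
theorem exists_isConj_length_lt {x : CoprodI H} (hx : (equiv x).fstIdx = (equiv x).lastIdx)
    (hlen : 2 ≤ (equiv x).toList.length) :
    ∃ y, IsConj y x ∧ (equiv y).toList.length < (equiv x).toList.length := by
  obtain ⟨i, hi⟩ : ∃ i, (equiv x).fstIdx = some i := by
    rcases h : (equiv x).toList with _ | ⟨⟨i, _⟩, _⟩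
    · simp [h] at hlen
    · exact ⟨i, by simp [fstIdx, h]⟩
  set p := equivPair i (equiv x)
  have hcons := toList_eq_cons_of_fstIdx_eq hi
  have hx_eq : x = of p.head * p.tail.prod := by
    rw [← prod_rcons, ← equivPair_symm, Equiv.symm_apply_apply, prod_equiv]
  have hlast : (equiv p.tail.prod).lastIdx = some i := by
    have htail : p.tail.toList ≠ [] := by
      intro h
      rw [hcons, h] at hlen
      simp at hlen
    rw [equiv_prod, ← hi, hx, lastIdx, lastIdx, hcons, List.getLast?_cons,
      List.getLast?_eq_some_getLast htail]
    rfl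
  refine ⟨p.tail.prod * of p.head, isConj_iff.2 ⟨of p.head, by rw [hx_eq]; group⟩, ?_⟩
  calc _ ≤ (equiv p.tail.prod).toList.length := length_equiv_mul_of_le _ hlast
    _ < (equiv x).toList.length := by rw [equiv_prod, hcons, List.length_cons]; exact lt_add_one _

end Length

theorem exists_isConj_of_isOfFinOrder [Nonempty ι] {x : CoprodI H} (hx : IsOfFinOrder x) :
    ∃ (i : ι) (m : H i), IsConj (of m) x := by
  classical
  induction hl : (equiv x).toList.length using Nat.strong_induction_on generalizing x with
  | _ l ih =>
  by_cases hlen : l ≤ 1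
  · obtain ⟨i, m, rfl⟩ := exists_of_eq_of_length_le_one (hl ▸ hlen)
    exact ⟨i, m, IsConj.refl _⟩
  by_cases hidx : (equiv x).fstIdx = (equiv x).lastIdx
  · obtain ⟨y, hyx, hlt⟩ := exists_isConj_length_lt hidx (by omega)
    obtain ⟨n, hn, hxn⟩ := isOfFinOrder_iff_pow_eq_one.1 hx
    have hy : IsOfFinOrder y :=
      isOfFinOrder_iff_pow_eq_one.2 ⟨n, hn, isConj_one_left.1 (hxn ▸ hyx.pow n)⟩
    obtain ⟨i, m, hmy⟩ := ih _ (hl ▸ hlt) hy rfl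
    exact ⟨i, m, hmy.trans hyx⟩
  · exact absurd hx (not_isOfFinOrder_of_fstIdx_ne_lastIdx hidx)

theorem center_eq_bot [Nontrivial ι] [∀ i, Nontrivial (H i)] :
    center (CoprodI H) = ⊥ := by
  classical
  refine eq_bot_iff.2 fun z hz => mem_bot.2 <| by_contra fun hz1 => ?_
  have hL : (equiv z).toList ≠ [] := fun h => hz1 <| by
    rw [← prod_equiv z, show equiv z = empty from Word.ext h, prod_empty]
  obtain ⟨j, hj⟩ : ∃ j, (equiv z).lastIdx = some j :=
    ⟨_, by rw [lastIdx, List.getLast?_eq_some_getLast hL]; rfl⟩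
  obtain ⟨k, hkj⟩ := exists_ne j
  obtain ⟨m, hm⟩ := exists_ne (1 : H k)
  have hright := toList_equiv_mul_of hm (x := z) (by simpa [hj] using hkj.symm)
  rw [← mem_center_iff.1 hz (of m), equiv_mul_s3] at hright
  by_cases hfst : (equiv z).fstIdx = some k
  · have hle := length_of_smul_le m hfst
    rw [hright] at hle
    simp at hle
  · apply hfst
    have hhead := congrArg List.head? ((toList_of_smul hm hfst).symm.trans hright)
    rw [List.head?_cons, List.head?_append_of_ne_nil _ hL] at hhead
    rw [fstIdx, ← hhead]
    rfl

section Projection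

variable [DecidableEq ι]

def proj (i : ι) : CoprodI H →* H i :=
  lift (Pi.mulSingle i (MonoidHom.id (H i)))

theorem proj_of_ne {i j : ι} (hji : j ≠ i) (m : H j) : proj i (of m) = 1 := by
  simp [proj, hji]

theorem proj_surjective (i : ι) : Function.Surjective (proj (H := H) i) :=
  (of_leftInverse i).surjective

theorem proj_eq_one_of_isConj {i j : ι} (hji : j ≠ i) {m : H j} {x : CoprodI H}
    (hx : IsConj (of m) x) : proj i x = 1 :=
  isConj_one_right.1 (proj_of_ne hji m ▸ (proj i).map_isConj hx)

theorem orderOf_proj_eq_card {x y : CoprodI H} (hxy : closure {x, y} = ⊤) {i : ι}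
    (hy : proj i y = 1) : orderOf (proj i x) = Nat.card (H i) := by
  refine orderOf_eq_card_of_forall_mem_zpowers fun g => ?_
  obtain ⟨z, rfl⟩ := proj_surjective i g
  have hle : closure {x, y} ≤ (zpowers (proj i x)).comap (proj i) := by
    rw [closure_le]
    rintro _ (rfl | rfl)
    · exact mem_zpowers _
    · exact (mem_comap.2 (hy ▸ one_mem _))
  exact hle (hxy ▸ mem_top z)

theorem card_dvd_of_closure_pair_eq_top {x y : CoprodI H} (hxy : closure {x, y} = ⊤) {i : ι}
    (hy : proj i y = 1) {n : ℕ} (hx : x ^ n = 1) : Nat.card (H i) ∣ n :=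
  orderOf_proj_eq_card hxy hy ▸ orderOf_dvd_of_pow_eq_one (by rw [← map_pow, hx, map_one])

end Projection

theorem exists_card_dvd_of_closure_pair_eq_top [Nontrivial ι] [∀ i, Nontrivial (H i)]
    {x y : CoprodI H} (hxy : closure {x, y} = ⊤) {n k : ℕ} (hn : n ≠ 0) (hk : k ≠ 0)
    (hx : x ^ n = 1) (hy : y ^ k = 1) :
    ∃ i j, i ≠ j ∧ Nat.card (H i) ∣ n ∧ Nat.card (H j) ∣ k := by
  classical
  obtain ⟨i, m, hxm⟩ :=
    exists_isConj_of_isOfFinOrder (isOfFinOrder_iff_pow_eq_one.2 ⟨n, Nat.pos_of_ne_zero hn, hx⟩)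
  obtain ⟨j, m', hym⟩ :=
    exists_isConj_of_isOfFinOrder (isOfFinOrder_iff_pow_eq_one.2 ⟨k, Nat.pos_of_ne_zero hk, hy⟩)
  have hyx : closure {y, x} = ⊤ := by rwa [Set.pair_comm]
  by_cases hij : i = j
  · subst hij
    obtain ⟨l, hl⟩ := exists_ne i
    have hcard := orderOf_proj_eq_card hxy (proj_eq_one_of_isConj hl.symm hym)
    rw [proj_eq_one_of_isConj hl.symm hxm, orderOf_one, eq_comm,
      Nat.card_eq_one_iff_unique] at hcard
    exact (not_subsingleton _ hcard.1).elim
  · exact ⟨i, j, hij,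
      card_dvd_of_closure_pair_eq_top hxy (proj_eq_one_of_isConj (Ne.symm hij) hym) hx,
      card_dvd_of_closure_pair_eq_top hyx (proj_eq_one_of_isConj hij hxm) hy⟩

end Monoid.CoprodI

theorem Subgroup.mem_of_pow_mem_of_pow_mem {H : Type*} [Group H] {K : Subgroup H} {z : H}
    {k l : ℕ} (hkl : k.Coprime l) (hk : z ^ k ∈ K) (hl : z ^ l ∈ K) : z ∈ K := by
  obtain ⟨a, b, hab⟩ := Nat.isCoprime_iff_coprime.2 hkl
  have hz : z = (z ^ k) ^ a * (z ^ l) ^ b := by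
    rw [← zpow_natCast, ← zpow_natCast, ← zpow_mul, ← zpow_mul, ← zpow_add, mul_comm (k : ℤ),
      mul_comm (l : ℤ), hab, zpow_one]
  exact hz ▸ mul_mem (zpow_mem hk a) (zpow_mem hl b)

namespace TorusKnotGroup

open Monoid Subgroup

variable {p q : ℕ} {K : Type*} [Group K]

theorem of_true_pow_eq (p q : ℕ) :
    (PresentedGroup.of true : G p q) ^ p = PresentedGroup.of false ^ q := by
  rw [← mul_inv_eq_one]
  exact PresentedGroup.one_of_mem (Set.mem_singleton _)

def lift (a b : K) (h : a ^ p = b ^ q) : G p q →* K :=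
  PresentedGroup.toGroup (f := fun t => cond t a b) <| by
    rintro _ rfl
    simp [h]

@[simp] theorem lift_of_true {a b : K} (h : a ^ p = b ^ q) :
    lift a b h (PresentedGroup.of true) = a :=
  PresentedGroup.toGroup.of _

@[simp] theorem lift_of_false {a b : K} (h : a ^ p = b ^ q) :
    lift a b h (PresentedGroup.of false) = b :=
  PresentedGroup.toGroup.of _

theorem closure_of_eq_top :
    closure {(PresentedGroup.of true : G p q), PresentedGroup.of false} = ⊤ := by
  rw [← PresentedGroup.closure_range_of]
  congr 1
  ext
  simp [or_comm]

theorem range_eq_closure (φ : G p q →* K) :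
    φ.range = closure {φ (PresentedGroup.of true), φ (PresentedGroup.of false)} := by
  rw [MonoidHom.range_eq_map, ← closure_of_eq_top, MonoidHom.map_closure, Set.image_pair]

theorem surjective_iff_closure_eq_top (φ : G p q →* K) :
    Function.Surjective φ ↔
      closure {φ (PresentedGroup.of true), φ (PresentedGroup.of false)} = ⊤ := by
  rw [← MonoidHom.range_eq_top, range_eq_closure]

def swap : G p q →* G q p :=
  lift (PresentedGroup.of false) (PresentedGroup.of true) (of_true_pow_eq q p).symm

theorem swap_surjective : Function.Surjective (swap : G p q →* G q p) := by
  rw [surjective_iff_closure_eq_top, swap, lift_of_true, lift_of_false, Set.pair_comm]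
  exact closure_of_eq_top

theorem exists_surjective_of_dvd {p q r s : ℕ} (hpq : p.Coprime q) (hr : r ∣ p) (hs : s ∣ q) :
    ∃ φ : G p q →* G r s, Function.Surjective φ := by
  obtain ⟨k, rfl⟩ := hr
  obtain ⟨l, rfl⟩ := hs
  set a : G r s := PresentedGroup.of true
  set b : G r s := PresentedGroup.of false
  have hab : a ^ r = b ^ s := of_true_pow_eq r s
  have hrel : (a ^ l) ^ (r * k) = (b ^ k) ^ (s * l) := by
    rw [← pow_mul, ← pow_mul, show l * (r * k) = r * (k * l) by ring,
      show k * (s * l) = s * (k * l) by ring, pow_mul a r, pow_mul b s, hab]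
  refine ⟨lift (a ^ l) (b ^ k) hrel, ?_⟩
  rw [surjective_iff_closure_eq_top, lift_of_true, lift_of_false, eq_top_iff,
    ← closure_of_eq_top, closure_le]
  set R := closure {a ^ l, b ^ k}
  have hal : a ^ l ∈ R := subset_closure (by simp)
  have hbk : b ^ k ∈ R := subset_closure (by simp)
  have hz : a ^ r ∈ R := by
    have hk : (a ^ r) ^ k = (b ^ k) ^ s := by rw [hab, ← pow_mul, ← pow_mul, mul_comm]
    have hl : (a ^ r) ^ l = (a ^ l) ^ r := by rw [← pow_mul, ← pow_mul, mul_comm]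
    exact mem_of_pow_mem_of_pow_mem hpq.coprime_mul_left.coprime_mul_left_right
      (hk ▸ pow_mem hbk s) (hl ▸ pow_mem hal r)
  have ha : a ∈ R :=
    mem_of_pow_mem_of_pow_mem hpq.coprime_mul_right.coprime_mul_left_right.symm hal hz
  have hb : b ∈ R := mem_of_pow_mem_of_pow_mem hpq.coprime_mul_left.coprime_mul_right_right hbk
    (hab ▸ hz)
  rintro _ (rfl | rfl)
  exacts [ha, hb]

abbrev ZModFactor (r s : ℕ) (b : Bool) : Type :=
  Multiplicative (ZMod (cond b r s))

theorem card_zModFactor (r s : ℕ) (b : Bool) : Nat.card (ZModFactor r s b) = cond b r s :=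
  (Nat.card_congr Multiplicative.toAdd).trans (Nat.card_zmod _)

def toCoprodZMod (r s : ℕ) : G r s →* CoprodI (ZModFactor r s) :=
  lift (CoprodI.of (i := true) (.ofAdd 1)) (CoprodI.of (i := false) (.ofAdd 1)) <| by
    simp [← map_pow, ← ofAdd_nsmul]

theorem toCoprodZMod_surjective (r s : ℕ) : Function.Surjective (toCoprodZMod r s) := by
  rw [surjective_iff_closure_eq_top, toCoprodZMod, lift_of_true, lift_of_false, eq_top_iff']
  intro x
  induction x using CoprodI.induction_on with
  | one => exact one_mem _
  | mul x y hx hy => exact mul_mem hx hy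
  | @of b m =>
    have hm : m = Multiplicative.ofAdd 1 ^ ((Multiplicative.toAdd m).cast : ℤ) := by
      rw [← ofAdd_zsmul, zsmul_one, ZMod.intCast_zmod_cast]
      rfl
    rw [hm, map_zpow]
    refine zpow_mem (subset_closure ?_) _
    cases b <;> simp

theorem dvd_of_surjective {p q r s : ℕ} (hp : p ≠ 0) (hq : q ≠ 0) (hr : 2 ≤ r) (hs : 2 ≤ s)
    {φ : G p q →* G r s} (hφ : Function.Surjective φ) : (r ∣ p ∧ s ∣ q) ∨ (r ∣ q ∧ s ∣ p) := by
  have : Fact (1 < r) := ⟨hr⟩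
  have : Fact (1 < s) := ⟨hs⟩
  have : ∀ b, Nontrivial (ZModFactor r s b) := fun b => by
    cases b
    exacts [inferInstanceAs (Nontrivial (Multiplicative (ZMod s))),
      inferInstanceAs (Nontrivial (Multiplicative (ZMod r)))]
  set χ := (toCoprodZMod r s).comp φ
  set U := χ (PresentedGroup.of true)
  set V := χ (PresentedGroup.of false)
  have hUV : closure {U, V} = ⊤ :=
    (surjective_iff_closure_eq_top χ).1 ((toCoprodZMod_surjective r s).comp hφ)
  have hpow : U ^ p = V ^ q := by simp only [U, V, ← map_pow, of_true_pow_eq]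
  have hcenter : U ^ p ∈ center _ := by
    rw [← centralizer_univ, ← coe_top, ← hUV, centralizer_closure, mem_centralizer_iff]
    rintro _ (rfl | rfl)
    · exact (Commute.self_pow U p).eq
    · rw [hpow]
      exact (Commute.self_pow V q).eq
  have hU : U ^ p = 1 := by rwa [CoprodI.center_eq_bot, mem_bot] at hcenter
  obtain ⟨i, j, hij, hi, hj⟩ :=
    CoprodI.exists_card_dvd_of_closure_pair_eq_top hUV hp hq hU (hpow ▸ hU)
  rw [card_zModFactor] at hi hj
  cases i <;> cases j <;> simp_all

end TorusKnotGroup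

theorem torus_knot_group_epimorphism_iff_general
    (p₁ p₂ r₁ r₂ : ℕ) (hp₁ : 2 ≤ p₁) (hp₂ : 2 ≤ p₂) (hr₁ : 2 ≤ r₁) (hr₂ : 2 ≤ r₂)
    (hp : Nat.gcd p₁ p₂ = 1) :
    (∃ φ : G p₁ p₂ →* G r₁ r₂, Function.Surjective φ) ↔
      ((r₁ ∣ p₁ ∧ r₂ ∣ p₂) ∨ (r₁ ∣ p₂ ∧ r₂ ∣ p₁)) := by
  constructor
  · rintro ⟨φ, hφ⟩
    exact TorusKnotGroup.dvd_of_surjective (by omega) (by omega) hr₁ hr₂ hφ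
  · rintro (⟨h₁, h₂⟩ | ⟨h₁, h₂⟩)
    · exact TorusKnotGroup.exists_surjective_of_dvd hp h₁ h₂
    · obtain ⟨ψ, hψ⟩ := TorusKnotGroup.exists_surjective_of_dvd (Nat.coprime_comm.1 hp) h₁ h₂
      exact ⟨ψ.comp TorusKnotGroup.swap, hψ.comp TorusKnotGroup.swap_surjective⟩

/-- Proposition 2, (2) ⇔ (3): there is an epimorphism `G(p₁,p₂) → G(r₁,r₂)` of torus-knot
groups if and only if `r₁ ∣ p₁` and `r₂ ∣ p₂`, or `r₁ ∣ p₂` and `r₂ ∣ p₁`. -/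
theorem torus_knot_group_epimorphism_iff
    (p₁ p₂ r₁ r₂ : ℕ) (hp₁ : 2 ≤ p₁) (hp₂ : 2 ≤ p₂) (hr₁ : 2 ≤ r₁) (hr₂ : 2 ≤ r₂)
    (hp : Nat.gcd p₁ p₂ = 1) (hr : Nat.gcd r₁ r₂ = 1) :
    (∃ φ : G p₁ p₂ →* G r₁ r₂, Function.Surjective φ) ↔
      ((r₁ ∣ p₁ ∧ r₂ ∣ p₂) ∨ (r₁ ∣ p₂ ∧ r₂ ∣ p₁)) :=
  torus_knot_group_epimorphism_iff_general p₁ p₂ r₁ r₂ hp₁ hp₂ hr₁ hr₂ hp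
end

section
/- Let p₁ and p₂ be odd positive integers. If there exists a surjective group homomorphism from the dihedral group D_{p₁} of order 2p₁ onto the dihedral group D_{p₂} of order 2p₂, then p₂ divides p₁. (This is the step in the proof of Proposition 4: an epimorphism of π-orbifold groups D_{p₁} → D_{p₂} forces p₂ ∣ p₁.) -/
/-! A surjection can only shrink the exponent, and the exponent of `D_n` is `lcm n 2`. Hence
`p₂ ∣ lcm p₂ 2 ∣ lcm p₁ 2 ∣ 2 p₁`, and `p₂` is odd. -/

theorem DihedralGroup.lcm_two_dvd_of_surjective {m n : ℕ}
    {φ : DihedralGroup m →* DihedralGroup n} (hφ : Function.Surjective φ) :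
    lcm n 2 ∣ lcm m 2 := by
  simpa only [DihedralGroup.exponent] using MonoidHom.exponent_dvd hφ

theorem dihedral_epimorphism_divides_general
    (p₁ p₂ : ℕ) (ho₂ : Odd p₂)
    (φ : DihedralGroup p₁ →* DihedralGroup p₂) (hφ : Function.Surjective φ) :
    p₂ ∣ p₁ := by
  have h : p₂ ∣ p₁ * 2 :=
    (dvd_lcm_left p₂ 2).trans <|
      (DihedralGroup.lcm_two_dvd_of_surjective hφ).trans (lcm_dvd_mul p₁ 2)
  exact (Nat.Coprime.dvd_mul_right (Nat.coprime_two_right.mpr ho₂)).mp h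

/-- If `p₁, p₂` are odd positive integers and there is a surjective homomorphism
`D_{p₁} → D_{p₂}` of dihedral groups, then `p₂ ∣ p₁`. -/
theorem dihedral_epimorphism_divides
    (p₁ p₂ : ℕ) (hp₁ : 0 < p₁) (hp₂ : 0 < p₂) (ho₁ : Odd p₁) (ho₂ : Odd p₂)
    (φ : DihedralGroup p₁ →* DihedralGroup p₂) (hφ : Function.Surjective φ) :
    p₂ ∣ p₁ :=
  dihedral_epimorphism_divides_general p₁ p₂ ho₂ φ hφ
end

section
/- Let p₁, p₂ ≥ 2 with gcd(p₁,p₂) = 1. Then p₁ and p₂ are both prime if and only if for all r₁, r₂ ≥ 2 with gcd(r₁,r₂) = 1, the existence of a surjective group homomorphism from the torus-knot group G(p₁,p₂) = ⟨u, v ∣ u^{p₁} = v^{p₂}⟩ onto G(r₁,r₂) = ⟨a, b ∣ a^{r₁} = b^{r₂}⟩ implies that (r₁, r₂) = (p₁, p₂) or (r₁, r₂) = (p₂, p₁). (Corollary 4.4: a (p₁,p₂)-torus knot is minimal if and only if both p₁ and p₂ are prime.) -/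
/-!
Send the generators `a, b` of `G(r,s)` to the rotations `x ↦ ζ x` and `x ↦ ξ (x - 1) + 1` of the
affine group of `ℂ`, where `ζ, ξ` are primitive `r`-th and `s`-th roots of unity; only the identity
commutes with both. Precomposed with an epimorphism `G(p,q) ↠ G(r,s)`, this sends the central
element `u^p = v^q` to an element commuting with both rotations, hence to `1`. The linear parts of
the images of `u` and `v` then have orders dividing `p` and `q`, and they generate a commutative
group containing `ζ` and `ξ`; so `r s ∣ p q`, which for primes `p, q` forces `{r, s} = {p, q}`.
Conversely, if `p = d e` with `1 < d < p`, then `u ↦ u, v ↦ v^e` is an epimorphism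
`G(p,q) ↠ G(d,q)`: it hits `v` because `v` is a product of powers of `v^e` and `v^q = u^d`.
-/

open Function Multiplicative PresentedGroup

theorem Subgroup.mem_of_pow_mem_of_coprime {H : Type*} [Group H] (K : Subgroup H) {g : H}
    {m n : ℕ} (hmn : m.Coprime n) (hm : g ^ m ∈ K) (hn : g ^ n ∈ K) : g ∈ K := by
  have hbezout : g = (g ^ m) ^ m.gcdA n * (g ^ n) ^ m.gcdB n := by
    rw [← zpow_natCast, ← zpow_natCast, ← zpow_mul, ← zpow_mul, ← zpow_add,
      ← Nat.gcd_eq_gcd_ab, hmn.gcd_eq_one, Nat.cast_one, zpow_one]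
  rw [hbezout]
  exact mul_mem (zpow_mem hm _) (zpow_mem hn _)

theorem PresentedGroup.surjective_of_forall_of_mem_range {α H : Type*} [Group H]
    {rels : Set (FreeGroup α)} {f : H →* PresentedGroup rels} (h : ∀ a, of a ∈ f.range) :
    Surjective f :=
  fun g => f.mem_range.mp (generated_by rels f.range h g)

theorem Nat.eq_or_eq_swap_of_mul_dvd_mul_of_prime {p q r s : ℕ} (hp : p.Prime) (hq : q.Prime)
    (hr : 2 ≤ r) (hs : 2 ≤ s) (h : r * s ∣ p * q) : (r, s) = (p, q) ∨ (r, s) = (q, p) := by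
  have hle := Nat.le_of_dvd (Nat.mul_pos hp.pos hq.pos) h
  have hprime_factor : ∀ d, d ∣ p * q → 1 < d → d < p * q → d = p ∨ d = q := by
    intro d hd h1 hlt
    obtain ⟨a, b, ha, hb, rfl⟩ := Nat.dvd_mul.mp hd
    rcases (Nat.dvd_prime hp).mp ha with rfl | rfl <;>
      rcases (Nat.dvd_prime hq).mp hb with rfl | rfl <;> simp_all
  rcases hprime_factor r (dvd_of_mul_right_dvd h) hr (by nlinarith) with rfl | rfl <;>
    rcases hprime_factor s (dvd_of_mul_left_dvd h) hs (by nlinarith) with rfl | rfl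
  · have := (Nat.prime_dvd_prime_iff_eq hp hq).mp (Nat.dvd_of_mul_dvd_mul_left hp.pos h)
    simp [this]
  · simp
  · simp
  · have := (Nat.prime_dvd_prime_iff_eq hq hp).mp
      (Nat.dvd_of_mul_dvd_mul_right hq.pos h)
    simp [this]

section AffineGroup

variable (K : Type*) [Field K]

abbrev AffineGroup.scaling : Kˣ →* MulAut (Multiplicative K) :=
  (MulAutMultiplicative K).symm.toMonoidHom.comp (DistribMulAction.toAddAut Kˣ K)

/-- `⟨ofAdd t, a⟩` is the affine map `x ↦ a * x + t`. -/
abbrev AffineGroup : Type _ := Multiplicative K ⋊[AffineGroup.scaling K] Kˣ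

variable {K}

open SemidirectProduct in
theorem AffineGroup.eq_one_of_commute {α β : Kˣ} (hα : α ≠ 1) (hβ : β ≠ 1) {z : AffineGroup K}
    (hzα : Commute z (inr α)) (hzβ : Commute z (MulAut.conj (inl (ofAdd 1)) (inr β))) :
    z = 1 := by
  have hα' : (α : K) - 1 ≠ 0 := sub_ne_zero.mpr (Units.val_eq_one.not.mpr hα)
  have hβ' : 1 - (β : K) ≠ 0 := sub_ne_zero.mpr (Ne.symm (Units.val_eq_one.not.mpr hβ))
  have hleft : toAdd z.left = 0 := by
    have h : toAdd z.left = α * toAdd z.left := by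
      simpa [Units.smul_def] using congrArg (fun w : AffineGroup K => toAdd w.left) hzα.eq
    exact (mul_eq_zero.mp (by linear_combination -h)).resolve_left hα'
  have hright : z.right = 1 := by
    have h : (z.right : K) - z.right * β = 1 - β := by
      simpa [hleft, Units.smul_def, sub_eq_add_neg] using
        congrArg (fun w : AffineGroup K => toAdd w.left) hzβ.eq
    exact Units.val_eq_one.mp <| sub_eq_zero.mp <|
      (mul_eq_zero.mp (by linear_combination h)).resolve_right hβ'
  ext
  · simpa using hleft
  · simp [hright]

end AffineGroup

namespace TorusKnot

variable {p q : ℕ}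

def lift {H : Type*} [Group H] (A B : H) (h : A ^ p = B ^ q) : G p q →* H :=
  toGroup (f := fun b => cond b A B) (by rintro _ rfl; simp [h])

@[simp] theorem lift_of_true {H : Type*} [Group H] (A B : H) (h : A ^ p = B ^ q) :
    lift A B h (of true) = A :=
  toGroup.of _

@[simp] theorem lift_of_false {H : Type*} [Group H] (A B : H) (h : A ^ p = B ^ q) :
    lift A B h (of false) = B :=
  toGroup.of _

variable (p q) in
theorem of_true_pow : (of true : G p q) ^ p = of false ^ q := by
  have h := one_of_mem (rels := torusRel p q) rfl
  rw [map_mul, map_inv, map_pow, map_pow] at h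
  exact mul_inv_eq_one.mp h

theorem commute_of_true_pow (g : G p q) : Commute (of true ^ p) g := by
  refine Subgroup.mem_centralizer_singleton_iff.mp (generated_by _ _ ?_ g) |>.symm
  rintro (_ | _) <;> rw [Subgroup.mem_centralizer_singleton_iff]
  · rw [of_true_pow]
    exact ((Commute.refl _).pow_right q).eq
  · exact ((Commute.refl _).pow_right p).eq

theorem pow_mul_eq_one {H : Type*} [CommGroup H] (f : G p q →* H) (h : f (of true) ^ p = 1)
    (g : G p q) : f g ^ (p * q) = 1 := by
  refine generated_by _ ((powMonoidHom (p * q)).comp f).ker ?_ g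
  have h' : f (of false) ^ q = 1 := by rw [← map_pow, ← of_true_pow, map_pow, h]
  rintro (_ | _) <;> simp only [MonoidHom.mem_ker, MonoidHom.comp_apply, powMonoidHom_apply]
  · rw [mul_comm, pow_mul, h', one_pow]
  · rw [pow_mul, h, one_pow]

variable (p q) in
theorem exists_surjective_swap : ∃ φ : G p q →* G q p, Surjective φ :=
  ⟨lift (of false) (of true) (of_true_pow q p).symm,
    surjective_of_forall_of_mem_range fun
      | true => ⟨of false, lift_of_false ..⟩
      | false => ⟨of true, lift_of_true ..⟩⟩

theorem exists_surjective_mul_left (d e : ℕ) (he : e.Coprime q) :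
    ∃ φ : G (d * e) q →* G d q, Surjective φ := by
  have hrel : (of true : G d q) ^ (d * e) = (of false ^ e) ^ q := by
    rw [pow_mul, of_true_pow, ← pow_mul, ← pow_mul, mul_comm]
  set φ := lift _ _ hrel
  refine ⟨φ, surjective_of_forall_of_mem_range fun
    | true => ⟨of true, lift_of_true ..⟩
    | false => φ.range.mem_of_pow_mem_of_coprime he ⟨of false, lift_of_false ..⟩ ?_⟩
  rw [← of_true_pow]
  exact ⟨of true ^ d, by simp [φ]⟩

theorem dvd_mul_of_surjective {r s : ℕ} (hr : 2 ≤ r) (hs : 2 ≤ s) {φ : G p q →* G r s}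
    (hφ : Surjective φ) : r ∣ p * q ∧ s ∣ p * q := by
  have hroot : ∀ n, 2 ≤ n → ∃ ζ : ℂˣ, IsPrimitiveRoot ζ n := fun n hn =>
    ⟨_, (Complex.isPrimitiveRoot_exp n (by omega)).isUnit_unit (by omega)⟩
  obtain ⟨α, hα⟩ := hroot r hr
  obtain ⟨β, hβ⟩ := hroot s hs
  set A : AffineGroup ℂ := SemidirectProduct.inr α
  set B : AffineGroup ℂ :=
    MulAut.conj (SemidirectProduct.inl (ofAdd 1)) (SemidirectProduct.inr β)
  have hAB : A ^ r = B ^ s := by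
    simp only [A, B, ← map_pow, hα.pow_eq_one, hβ.pow_eq_one, map_one]
  set f := (lift A B hAB).comp φ
  obtain ⟨a, ha⟩ := hφ (of true)
  obtain ⟨b, hb⟩ := hφ (of false)
  have hfa : f a = A := by simp [f, ha]
  have hfb : f b = B := by simp [f, hb]
  have hcentral : f (of true) ^ p = 1 := by
    have hcA : Commute (f (of true ^ p)) A := hfa ▸ (commute_of_true_pow a).map f
    have hcB : Commute (f (of true ^ p)) B := hfb ▸ (commute_of_true_pow b).map f
    rw [← map_pow]
    exact AffineGroup.eq_one_of_commute (hα.ne_one hr) (hβ.ne_one hs) hcA hcB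
  have hexp := pow_mul_eq_one (SemidirectProduct.rightHom.comp f)
    (by rw [MonoidHom.comp_apply, ← map_pow, hcentral, map_one])
  refine ⟨(hα.pow_eq_one_iff_dvd _).mp ?_, (hβ.pow_eq_one_iff_dvd _).mp ?_⟩
  · simpa [hfa, A] using hexp a
  · simpa [hfb, B] using hexp b

variable (p q) in
def IsMinimal : Prop :=
  ∀ r s : ℕ, 2 ≤ r → 2 ≤ s → Nat.gcd r s = 1 → (∃ φ : G p q →* G r s, Surjective φ) →
    (r, s) = (p, q) ∨ (r, s) = (q, p)

theorem isMinimal_of_prime (hp : p.Prime) (hq : q.Prime) : IsMinimal p q :=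
  fun _ _ hr hs hrs ⟨_, hφ⟩ =>
    have ⟨hrpq, hspq⟩ := dvd_mul_of_surjective hr hs hφ
    Nat.eq_or_eq_swap_of_mul_dvd_mul_of_prime hp hq hr hs
      (Nat.Coprime.mul_dvd_of_dvd_of_dvd hrs hrpq hspq)

theorem IsMinimal.swap (h : IsMinimal p q) : IsMinimal q p := by
  rintro r s hr hs hrs ⟨φ, hφ⟩
  obtain ⟨σ, hσ⟩ := exists_surjective_swap p q
  exact (h r s hr hs hrs ⟨φ.comp σ, hφ.comp hσ⟩).symm

theorem IsMinimal.prime_left (hp : 2 ≤ p) (hq : 2 ≤ q) (hpq : Nat.gcd p q = 1)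
    (h : IsMinimal p q) : p.Prime := by
  by_contra hnp
  obtain ⟨d, ⟨e, rfl⟩, hd, hdp⟩ := Nat.exists_dvd_of_not_prime2 hp hnp
  have hdq : Nat.gcd d q = 1 := Nat.Coprime.coprime_dvd_left (dvd_mul_right d e) hpq
  have heq : e.Coprime q := Nat.Coprime.coprime_dvd_left (dvd_mul_left e d) hpq
  have := h d q hd hq hdq (exists_surjective_mul_left d e heq)
  simp only [Prod.mk.injEq] at this
  omega

end TorusKnot

/-- Corollary 4.4: a `(p₁,p₂)`-torus knot is minimal if and only if both `p₁` and `p₂`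
are prime, expressed via epimorphisms of torus-knot groups. -/
theorem torus_knot_minimal_iff_both_prime
    (p₁ p₂ : ℕ) (hp₁ : 2 ≤ p₁) (hp₂ : 2 ≤ p₂) (hp : Nat.gcd p₁ p₂ = 1) :
    (Nat.Prime p₁ ∧ Nat.Prime p₂) ↔
      ∀ r₁ r₂ : ℕ, 2 ≤ r₁ → 2 ≤ r₂ → Nat.gcd r₁ r₂ = 1 →
        (∃ φ : G p₁ p₂ →* G r₁ r₂, Function.Surjective φ) →
        (r₁, r₂) = (p₁, p₂) ∨ (r₁, r₂) = (p₂, p₁) :=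
  ⟨fun ⟨h₁, h₂⟩ => TorusKnot.isMinimal_of_prime h₁ h₂,
    fun (h : TorusKnot.IsMinimal p₁ p₂) =>
      ⟨h.prime_left hp₁ hp₂ hp, h.swap.prime_left hp₂ hp₁ (Nat.gcd_comm p₁ p₂ ▸ hp)⟩⟩
end

section
/- Let p₁, p₂ ≥ 2 and let i, j be integers with i·p₁ + j·p₂ = 1. Then the normal closure of the single element u^j v^i in the torus-knot group G(p₁,p₂) = ⟨u, v ∣ u^{p₁} = v^{p₂}⟩ is the whole group. (This is the claim, used in the proofs of Propositions 3 and Corollary 3.1, that u^j v^i is a meridian of the (p₁,p₂)-torus knot and hence normally generates its group.) -/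
/-!
Killing `m = u^j v^i` forces `u^j = v^{-i}`; together with `u^{p₁} = v^{p₂}` this gives
`u = u^{i p₁ + j p₂} = (v^{p₂})^i (v^{-i})^{p₂} = 1`, and then `v = 1` in the same way. So the
quotient by the normal closure of `m` is trivial.
-/

section ZpowRelations

variable {H : Type*} [Group H] {a b : H} {p q i j : ℤ}

theorem eq_one_of_zpow_eq_zpow_of_zpow_mul_zpow_eq_one (hpq : i * p + j * q = 1)
    (hrel : a ^ p = b ^ q) (hm : a ^ j * b ^ i = 1) : a = 1 := by
  have haj : a ^ j = (b ^ i)⁻¹ := eq_inv_of_mul_eq_one_left hm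
  calc a = a ^ (i * p + j * q) := by rw [hpq, zpow_one]
    _ = (a ^ p) ^ i * (a ^ j) ^ q := by rw [zpow_add, mul_comm i, zpow_mul, zpow_mul]
    _ = 1 := by rw [hrel, haj, ← zpow_mul, inv_zpow, ← zpow_mul, mul_comm q i, mul_inv_cancel]

theorem eq_one_and_eq_one_of_zpow_eq_zpow_of_zpow_mul_zpow_eq_one (hpq : i * p + j * q = 1)
    (hrel : a ^ p = b ^ q) (hm : a ^ j * b ^ i = 1) : a = 1 ∧ b = 1 := by
  have ha : a = 1 := eq_one_of_zpow_eq_zpow_of_zpow_mul_zpow_eq_one hpq hrel hm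
  subst ha
  have hbi : b ^ i = 1 := by simpa using hm
  have hbq : b ^ q = 1 := by rw [← hrel, one_zpow]
  refine ⟨rfl, ?_⟩
  calc b = b ^ (i * p + j * q) := by rw [hpq, zpow_one]
    _ = (b ^ i) ^ p * (b ^ q) ^ j := by rw [zpow_add, zpow_mul, mul_comm j, zpow_mul]
    _ = 1 := by rw [hbi, hbq, one_zpow, one_zpow, one_mul]

end ZpowRelations

theorem G.of_true_zpow_eq_of_false_zpow (p q : ℕ) :
    (PresentedGroup.of true : G p q) ^ (p : ℤ) = (PresentedGroup.of false : G p q) ^ (q : ℤ) := by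
  have h := PresentedGroup.one_of_mem (rels := torusRel p q) rfl
  rw [map_mul, map_inv, map_pow, map_pow, mul_inv_eq_one] at h
  exact_mod_cast h

theorem PresentedGroup.normalClosure_eq_top_of_forall_mk_of_eq_one {α : Type*}
    {rels : Set (FreeGroup α)} {s : Set (PresentedGroup rels)}
    (h : ∀ x, (QuotientGroup.mk (PresentedGroup.of x) : _ ⧸ Subgroup.normalClosure s) = 1) :
    Subgroup.normalClosure s = ⊤ :=
  eq_top_iff.2 fun g _ =>
    PresentedGroup.generated_by rels _ (fun x => (QuotientGroup.eq_one_iff _).1 (h x)) g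

theorem meridian_normally_generates_torus_knot_group_general
    (p₁ p₂ : ℕ) (i j : ℤ)
    (h : i * (p₁ : ℤ) + j * (p₂ : ℤ) = 1) :
    Subgroup.normalClosure
      {(PresentedGroup.of true : G p₁ p₂) ^ j * (PresentedGroup.of false : G p₁ p₂) ^ i} =
      (⊤ : Subgroup (G p₁ p₂)) := by
  set N := Subgroup.normalClosure
    {(PresentedGroup.of true : G p₁ p₂) ^ j * (PresentedGroup.of false : G p₁ p₂) ^ i}
  let π : G p₁ p₂ →* G p₁ p₂ ⧸ N := QuotientGroup.mk' N
  have hrel : π (.of true) ^ (p₁ : ℤ) = π (.of false) ^ (p₂ : ℤ) := by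
    rw [← map_zpow, ← map_zpow, G.of_true_zpow_eq_of_false_zpow]
  have hm : π (.of true) ^ j * π (.of false) ^ i = 1 := by
    rw [← map_zpow, ← map_zpow, ← map_mul]
    exact (QuotientGroup.eq_one_iff _).2 (Subgroup.subset_normalClosure rfl)
  obtain ⟨hu, hv⟩ := eq_one_and_eq_one_of_zpow_eq_zpow_of_zpow_mul_zpow_eq_one h hrel hm
  refine PresentedGroup.normalClosure_eq_top_of_forall_mk_of_eq_one fun x => ?_
  cases x
  · exact hv
  · exact hu

/-- If `i p₁ + j p₂ = 1`, then the meridian `u^j v^i` normally generates the torus-knot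
group `G(p₁,p₂)`. -/
theorem meridian_normally_generates_torus_knot_group
    (p₁ p₂ : ℕ) (hp₁ : 2 ≤ p₁) (hp₂ : 2 ≤ p₂) (i j : ℤ)
    (h : i * (p₁ : ℤ) + j * (p₂ : ℤ) = 1) :
    Subgroup.normalClosure
      {(PresentedGroup.of true : G p₁ p₂) ^ j * (PresentedGroup.of false : G p₁ p₂) ^ i} =
      (⊤ : Subgroup (G p₁ p₂)) :=
  meridian_normally_generates_torus_knot_group_general p₁ p₂ i j h
end
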